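/- arXiv:1805.06116 — 4 statements merged into one kernel-verified Lean document; each statement's English description precedes it below -/
import Mathlib

section
/- Let S = {x_1,...,x_N} be N distinct points in R^n, f a continuous function on R^n, and e_1,...,e_N continuous functions on R^n with |e_i(t)| = 1 for all t. Suppose |f(x_i - x_j)| < |f(0)|/(N-1) whenever i ≠ j. Then the functions t ↦ e_i(t) f(t - x_i), i = 1,...,N, are linearly independent over the complex numbers. -/
open scoped BigOperators

open Finset

/-
Evaluate the functions at the points `x_k`: the matrix `(e_i(x_k) f(x_k - x_i))` has diagonal
entries of modulus `|f(0)|`, while the off-diagonal entries of each column sum to less than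
`(N - 1) · |f(0)| / (N - 1)`. A strictly diagonally dominant matrix is invertible
(Gershgorin), so a vanishing linear combination of the functions has zero coefficients.
-/

theorem Finset.sum_lt_of_forall_lt_div_card {ι : Type*} {s : Finset ι} (hs : s.Nonempty)
    {a : ι → ℝ} {c : ℝ} (h : ∀ i ∈ s, a i < c / #s) : ∑ i ∈ s, a i < c := by
  have hcard : (0 : ℝ) < #s := by exact_mod_cast hs.card_pos
  calc ∑ i ∈ s, a i < ∑ _i ∈ s, c / #s := sum_lt_sum_of_nonempty hs h
    _ = c := by rw [sum_const, nsmul_eq_mul]; field_simp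

theorem linearIndependent_of_sum_norm_lt_norm_apply {K ι α : Type*} [NormedField K]
    [Fintype ι] [DecidableEq ι] (φ : ι → α → K) (p : ι → α)
    (h : ∀ k, ∑ i ∈ univ.erase k, ‖φ i (p k)‖ < ‖φ k (p k)‖) :
    LinearIndependent K φ :=
  have hdet : (Matrix.of fun i k => φ i (p k)).det ≠ 0 := det_ne_zero_of_sum_col_lt_diag h
  (Matrix.linearIndependent_rows_of_det_ne_zero hdet).of_comp (LinearMap.funLeft K K p)

theorem stmt_0_general {n N : ℕ} (hN : 2 ≤ N)
    (x : Fin N → EuclideanSpace ℝ (Fin n))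
    (f : EuclideanSpace ℝ (Fin n) → ℂ)
    (e : Fin N → EuclideanSpace ℝ (Fin n) → ℂ)
    (hmod : ∀ i t, ‖e i t‖ = 1)
    (hsep : ∀ i j, i ≠ j →
      ‖f (x i - x j)‖ < ‖f 0‖ / ((N : ℝ) - 1)) :
    LinearIndependent ℂ
      (fun i : Fin N => (fun t => e i t * f (t - x i) :
        EuclideanSpace ℝ (Fin n) → ℂ)) := by
  refine linearIndependent_of_sum_norm_lt_norm_apply _ x fun k => ?_
  have hcard : ((#(univ.erase k) : ℕ) : ℝ) = (N : ℝ) - 1 := by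
    rw [card_erase_of_mem (mem_univ k), card_univ, Fintype.card_fin, Nat.cast_sub (by omega)]
    simp
  have hne : (univ.erase k).Nonempty := by
    rw [← card_pos, card_erase_of_mem (mem_univ k), card_univ, Fintype.card_fin]
    omega
  simp only [norm_mul, hmod, one_mul, sub_self]
  refine sum_lt_of_forall_lt_div_card hne fun i hi => ?_
  rw [hcard]
  exact hsep k i (ne_of_mem_erase hi).symm

/-- Lemma 1: if the unimodular-twisted translates of a continuous `f` by points
that are separated relative to the decay of `f` are involved, they are linearly
independent. -/
theorem stmt_0 {n N : ℕ} (hN : 2 ≤ N)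
    (x : Fin N → EuclideanSpace ℝ (Fin n)) (hx : Function.Injective x)
    (f : EuclideanSpace ℝ (Fin n) → ℂ) (hf : Continuous f)
    (e : Fin N → EuclideanSpace ℝ (Fin n) → ℂ) (he : ∀ i, Continuous (e i))
    (hmod : ∀ i t, ‖e i t‖ = 1)
    (hsep : ∀ i j, i ≠ j →
      ‖f (x i - x j)‖ < ‖f 0‖ / ((N : ℝ) - 1)) :
    LinearIndependent ℂ
      (fun i : Fin N => (fun t => e i t * f (t - x i) :
        EuclideanSpace ℝ (Fin n) → ℂ)) :=
  stmt_0_general hN x f e hmod hsep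
end

section
/- Let f ∈ L^1(R^n) with Fourier transform f̂ continuous and vanishing at infinity, f̂(0) = ∫ f ≠ 0. Suppose Λ = {(x_1,ω_1),...,(x_N,ω_N)} ⊂ R^{2n} and R > 0 satisfy |f̂(ω)| < |f̂(0)|/(N-1) for all ‖ω‖ > R, and ‖ω_i - ω_j‖ > R for all i ≠ j. Then the functions π(x_i,ω_i)f are linearly independent in L^2(R^n). -/
/-!
Taking Fourier transforms turns a relation `∑ cᵢ π(xᵢ, ωᵢ) f = 0` into
`∑ᵢ cᵢ e(-⟪xᵢ, w - ωᵢ⟫) f̂(w - ωᵢ) = 0` for every frequency `w`. Evaluated at `w = ωⱼ` this is a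
linear system `A c = 0` whose diagonal entries have modulus `|f̂(0)|` and whose off-diagonal
entries, by separation and decay, have modulus `< |f̂(0)| / (N - 1)`. So `A` is strictly
diagonally dominant, hence invertible, and `c = 0`.
-/

open MeasureTheory
open scoped FourierTransform RealInnerProductSpace Real

theorem Matrix.det_ne_zero_of_norm_offDiag_lt {m K : Type*} [Fintype m] [DecidableEq m]
    [NormedField K] (hm : 1 < Fintype.card m) (A : Matrix m m K) {a : ℝ}
    (hdiag : ∀ k, ‖A k k‖ = a) (hoff : ∀ k j, k ≠ j → ‖A k j‖ < a / (Fintype.card m - 1)) :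
    A.det ≠ 0 := by
  refine det_ne_zero_of_sum_row_lt_diag fun k ↦ ?_
  have hne : (Finset.univ.erase k).Nonempty := by
    rw [← Finset.card_pos, Finset.card_erase_of_mem (Finset.mem_univ k), Finset.card_univ]
    omega
  calc ∑ j ∈ Finset.univ.erase k, ‖A k j‖
      < ∑ _j ∈ Finset.univ.erase k, a / (Fintype.card m - 1) :=
        Finset.sum_lt_sum_of_nonempty hne fun j hj ↦ hoff k j (Finset.ne_of_mem_erase hj).symm
    _ = ‖A k k‖ := by
        have : (Fintype.card m : ℝ) - 1 ≠ 0 := by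
          have : (1 : ℝ) < Fintype.card m := by exact_mod_cast hm
          linarith
        rw [Finset.sum_const, Finset.card_erase_of_mem (Finset.mem_univ k), Finset.card_univ,
          nsmul_eq_mul, Nat.cast_sub hm.le, hdiag, Nat.cast_one]
        field_simp

variable {V E : Type*} [NormedAddCommGroup V] [InnerProductSpace ℝ V] [FiniteDimensional ℝ V]
  [MeasurableSpace V] [BorelSpace V] [NormedAddCommGroup E] [NormedSpace ℂ E]

namespace Real

theorem fourier_comp_sub_right (f : V → E) (x w : V) :
    𝓕 (fun t ↦ f (t - x)) w = 𝐞 (-⟪x, w⟫) • 𝓕 f w := by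
  have := congrFun (VectorFourier.fourierIntegral_comp_add_right 𝐞 volume (innerₗ V) f (-x)) w
  simp only [Function.comp_def, map_neg, LinearMap.neg_apply, innerₗ_apply_apply] at this
  simp only [sub_eq_add_neg]
  exact this

theorem fourier_fourierChar_inner_smul (f : V → E) (ω w : V) :
    𝓕 (fun t ↦ 𝐞 ⟪ω, t⟫ • f t) w = 𝓕 f (w - ω) := by
  simp only [fourier_eq, smul_smul, ← AddChar.map_add_eq_mul, inner_sub_right, real_inner_comm ω]
  congr 1 with t
  ring_nf

theorem fourierChar_eq_exp (r : ℝ) : (𝐞 r : ℂ) = Complex.exp (2 * π * Complex.I * r) := by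
  rw [fourierChar_apply]; push_cast; ring_nf

theorem fourier_eq_integral_mul_exp (f : V → ℂ) (w : V) :
    𝓕 f w = ∫ t, f t * Complex.exp (-(2 * π * Complex.I * ⟪w, t⟫)) := by
  simp only [fourier_eq, Circle.smul_def, fourierChar_eq_exp, smul_eq_mul, real_inner_comm w]
  congr 1 with t
  push_cast; ring_nf

theorem integrable_fourierChar_inner_smul {f : V → E} (hf : Integrable f) (ω : V) :
    Integrable (fun t ↦ 𝐞 ⟪ω, t⟫ • f t) := by
  simpa [real_inner_comm ω, inner_neg_right] using
    (fourierIntegral_convergent_iff (μ := volume) (-ω)).2 hf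

end Real

/-- The time-frequency shift `π(x, ω)`. -/
noncomputable def timeFreqShift (x ω : V) (f : V → E) : V → E := fun t ↦ 𝐞 ⟪ω, t⟫ • f (t - x)

theorem MeasureTheory.Integrable.timeFreqShift {f : V → E} (hf : Integrable f) (x ω : V) :
    Integrable (timeFreqShift x ω f) :=
  Real.integrable_fourierChar_inner_smul (hf.comp_sub_right x) ω

theorem Real.fourier_timeFreqShift (f : V → E) (x ω w : V) :
    𝓕 (timeFreqShift x ω f) w = 𝐞 (-⟪x, w - ω⟫) • 𝓕 f (w - ω) := by
  rw [show timeFreqShift x ω f = fun t ↦ 𝐞 ⟪ω, t⟫ • f (t - x) from rfl,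
    fourier_fourierChar_inner_smul, fourier_comp_sub_right]

theorem sum_smul_fourier_eq_zero_of_sum_timeFreqShift_ae_eq_zero {ι : Type*} [Fintype ι]
    {f : V → E} (hf : Integrable f) (x ω : ι → V) (c : ι → ℂ)
    (hdep : ∀ᵐ t, ∑ i, c i • timeFreqShift (x i) (ω i) f t = 0) (w : V) :
    ∑ i, c i • 𝐞 (-⟪x i, w - ω i⟫) • 𝓕 f (w - ω i) = 0 := by
  have hint : ∀ i, Integrable fun t ↦ 𝐞 (-⟪t, w⟫) • c i • timeFreqShift (x i) (ω i) f t :=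
    fun i ↦ (Real.fourierIntegral_convergent_iff w).2 ((hf.timeFreqShift _ _).smul (c i))
  calc ∑ i, c i • 𝐞 (-⟪x i, w - ω i⟫) • 𝓕 f (w - ω i)
      = ∑ i, c i • 𝓕 (timeFreqShift (x i) (ω i) f) w := by
        simp only [Real.fourier_timeFreqShift]
    _ = 𝓕 (fun t ↦ ∑ i, c i • timeFreqShift (x i) (ω i) f t) w := by
        simp only [Real.fourier_eq, Finset.smul_sum, ← integral_smul, smul_comm (c _)]
        rw [integral_finsetSum _ fun i _ ↦ hint i]
    _ = 𝓕 (fun _ : V ↦ (0 : E)) w := Real.fourier_congr_ae hdep w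
    _ = 0 := by simp [Real.fourier_eq]

theorem stmt_5_general {n N : ℕ} (hN : 2 ≤ N)
    (f : EuclideanSpace ℝ (Fin n) → ℂ) (hf : Integrable f)
    (fhat : EuclideanSpace ℝ (Fin n) → ℂ)
    (hfhat : ∀ w : EuclideanSpace ℝ (Fin n),
      fhat w = ∫ t, f t * Complex.exp (-(2 * Real.pi * Complex.I * ((inner ℝ w t : ℝ) : ℂ))))
    (x ω : Fin N → EuclideanSpace ℝ (Fin n))
    (R : ℝ)
    (hdecay : ∀ w : EuclideanSpace ℝ (Fin n), R < ‖w‖ →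
      ‖fhat w‖ < ‖fhat 0‖ / ((N : ℝ) - 1))
    (hsep : ∀ i j, i ≠ j → R < ‖ω i - ω j‖)
    (c : Fin N → ℂ)
    (hdep : ∀ᵐ t : EuclideanSpace ℝ (Fin n),
      ∑ i, c i * (Complex.exp (2 * Real.pi * Complex.I * ((inner ℝ (ω i) t : ℝ) : ℂ)) *
        f (t - x i)) = 0) :
    ∀ i, c i = 0 := by
  obtain rfl : fhat = 𝓕 f :=
    funext fun w ↦ (hfhat w).trans (Real.fourier_eq_integral_mul_exp f w).symm
  have hdep' : ∀ᵐ t, ∑ i, c i • timeFreqShift (x i) (ω i) f t = 0 := by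
    filter_upwards [hdep] with t ht
    simpa [timeFreqShift, Circle.smul_def, Real.fourierChar_eq_exp] using ht
  let A : Matrix (Fin N) (Fin N) ℂ := fun j i ↦ 𝐞 (-⟪x i, ω j - ω i⟫) • 𝓕 f (ω j - ω i)
  have hA : A.det ≠ 0 :=
    A.det_ne_zero_of_norm_offDiag_lt (by simp only [Fintype.card_fin]; omega) (a := ‖𝓕 f 0‖)
      (by simp [A])
      fun j i hji ↦ by simpa [A, Circle.norm_smul] using hdecay _ (hsep j i hji)
  have hAc : A.mulVec c = 0 := funext fun j ↦ by
    simpa [A, Matrix.mulVec, dotProduct, mul_comm, mul_left_comm] using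
      sum_smul_fourier_eq_zero_of_sum_timeFreqShift_ae_eq_zero hf x ω c hdep' (ω j)
  exact congrFun (Matrix.eq_zero_of_mulVec_eq_zero hA hAc)

/-- Corollary 2: the frequency-domain version of Theorem 1.  If the Fourier
transform of `f ∈ L¹` decays below `|f̂ 0|/(N-1)` outside the ball of radius `R`
and the frequency coordinates of `Λ` are separated by more than `R`, then the
time-frequency translates of `f` are linearly independent (in the a.e. sense,
i.e. in `L²`). -/
theorem stmt_5 {n N : ℕ} (hN : 2 ≤ N)
    (f : EuclideanSpace ℝ (Fin n) → ℂ) (hf : Integrable f)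
    (fhat : EuclideanSpace ℝ (Fin n) → ℂ)
    (hfhat : ∀ w : EuclideanSpace ℝ (Fin n),
      fhat w = ∫ t, f t * Complex.exp (-(2 * Real.pi * Complex.I * ((inner ℝ w t : ℝ) : ℂ))))
    (hfhat0 : fhat 0 ≠ 0)
    (x ω : Fin N → EuclideanSpace ℝ (Fin n))
    (R : ℝ) (hR : 0 < R)
    (hdecay : ∀ w : EuclideanSpace ℝ (Fin n), R < ‖w‖ →
      ‖fhat w‖ < ‖fhat 0‖ / ((N : ℝ) - 1))
    (hsep : ∀ i j, i ≠ j → R < ‖ω i - ω j‖)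
    (c : Fin N → ℂ)
    (hdep : ∀ᵐ t : EuclideanSpace ℝ (Fin n),
      ∑ i, c i * (Complex.exp (2 * Real.pi * Complex.I * ((inner ℝ (ω i) t : ℝ) : ℂ)) *
        f (t - x i)) = 0) :
    ∀ i, c i = 0 :=
  stmt_5_general hN f hf fhat hfhat x ω R hdecay hsep c hdep
end

section
/- Fix ω ∈ R. Let f(t) = cos(ω t)/|t| for t ≠ 0 (with f undefined or arbitrary at 0, and ω chosen so cos is nonvanishing near 0, e.g. any ω). Then for every finite set Λ = {(x_1,ω_1),...,(x_N,ω_N)} ⊂ R^2 with pairwise distinct x_i, the time-frequency translates exp(2πi ω_i t) f(t - x_i) are linearly independent as functions on R minus the translated singularities. -/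
/-!
Multiply a vanishing combination `∑ c j m j(t) f(t - x j)` by `|t - x i|` and let `t → x i`.
Since `f` is continuous away from `0`, every term with `j ≠ i` tends to `0`, while `|t| f(t) → L ≠ 0`
makes the `i`-th term tend to `c i m i(x i) L`; hence `c i = 0`. For `f(t) = cos(ω t)/|t|` one has
`L = 1`, and the modulations `exp(2πi w t)` never vanish.
-/

open Filter Topology

theorem tendsto_sub_const_nhdsNE (c : ℝ) : Tendsto (fun t : ℝ => t - c) (𝓝[≠] c) (𝓝[≠] 0) := by
  refine tendsto_nhdsWithin_of_tendsto_nhds_of_eventually_within _ ?_ ?_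
  · simpa using ((continuous_sub_right c).tendsto c).mono_left nhdsWithin_le_nhds
  · filter_upwards [self_mem_nhdsWithin] with t ht
    exact sub_ne_zero.mpr ht

section Translates

variable {ι : Type*} [Fintype ι] {f : ℝ → ℂ} {L : ℂ} {x : ι → ℝ}

theorem tendsto_abs_sub_mul_comp_sub_self
    (hlim : Tendsto (fun t : ℝ => ((|t| : ℝ) : ℂ) * f t) (𝓝[≠] 0) (𝓝 L)) (a : ℝ) :
    Tendsto (fun t : ℝ => ((|t - a| : ℝ) : ℂ) * f (t - a)) (𝓝[≠] a) (𝓝 L) :=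
  hlim.comp (tendsto_sub_const_nhdsNE a)

theorem tendsto_abs_sub_mul_comp_sub_of_ne (hcont : ContinuousOn f {0}ᶜ) {a b : ℝ} (hab : a ≠ b) :
    Tendsto (fun t : ℝ => ((|t - a| : ℝ) : ℂ) * f (t - b)) (𝓝 a) (𝓝 0) := by
  have hfa : ContinuousAt (fun t => f (t - b)) a :=
    (hcont.continuousAt (isOpen_compl_singleton.mem_nhds (sub_ne_zero.mpr hab))).comp
      (continuous_sub_right b).continuousAt (x := a)
  have habs : Tendsto (fun t : ℝ => ((|t - a| : ℝ) : ℂ)) (𝓝 a) (𝓝 0) := by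
    have : Continuous (fun t : ℝ => ((|t - a| : ℝ) : ℂ)) := by fun_prop
    simpa using this.tendsto a
  simpa using habs.mul hfa.tendsto

theorem eq_zero_of_sum_mul_comp_sub_eq_zero (hL : L ≠ 0) (hcont : ContinuousOn f {0}ᶜ)
    (hlim : Tendsto (fun t : ℝ => ((|t| : ℝ) : ℂ) * f t) (𝓝[≠] 0) (𝓝 L)) (hx : Function.Injective x)
    {m : ι → ℝ → ℂ} (hm : ∀ j, Continuous (m j)) (hm0 : ∀ j, m j (x j) ≠ 0) {c : ι → ℂ}
    (hdep : ∀ t : ℝ, (∀ i, t ≠ x i) → ∑ i, c i * (m i t * f (t - x i)) = 0) (i : ι) :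
    c i = 0 := by
  classical
  set F : ℝ → ℂ := fun t => ∑ j, c j * m j t * (((|t - x i| : ℝ) : ℂ) * f (t - x j))
  have hF0 : ∀ᶠ t in 𝓝[≠] x i, F t = 0 := by
    have hsing : ∀ᶠ t in 𝓝[≠] x i, ∀ j, t ≠ x j := by
      refine eventually_all.mpr fun j => ?_
      by_cases hji : j = i
      · subst hji
        exact self_mem_nhdsWithin
      · exact nhdsWithin_le_nhds (eventually_ne_nhds fun h => hji (hx h).symm)
    filter_upwards [hsing] with t ht
    calc F t = ((|t - x i| : ℝ) : ℂ) * ∑ j, c j * (m j t * f (t - x j)) := by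
          simp only [F, Finset.mul_sum]
          exact Finset.sum_congr rfl fun j _ => by ring
      _ = 0 := by rw [hdep t ht, mul_zero]
  have hF : Tendsto F (𝓝[≠] x i) (𝓝 (c i * m i (x i) * L)) := by
    suffices Tendsto F (𝓝[≠] x i) (𝓝 (∑ j, if j = i then c j * m j (x j) * L else 0)) by
      simpa using this
    refine tendsto_finsetSum _ fun j _ => ?_
    have hcm : Tendsto (fun t => c j * m j t) (𝓝[≠] x i) (𝓝 (c j * m j (x i))) :=
      ((continuous_const.mul (hm j)).tendsto _).mono_left nhdsWithin_le_nhds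
    split_ifs with hji
    · subst hji
      exact hcm.mul (tendsto_abs_sub_mul_comp_sub_self hlim (x j))
    · simpa using hcm.mul ((tendsto_abs_sub_mul_comp_sub_of_ne hcont
        fun h => hji (hx h).symm).mono_left nhdsWithin_le_nhds)
  have hlim0 : c i * m i (x i) * L = 0 :=
    tendsto_nhds_unique hF (tendsto_const_nhds.congr' (hF0.mono fun t ht => ht.symm))
  simpa [hm0 i, hL] using hlim0

end Translates

theorem continuousOn_cos_mul_div_abs (ω : ℝ) :
    ContinuousOn (fun t : ℝ => ((Real.cos (ω * t) / |t| : ℝ) : ℂ)) {0}ᶜ := by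
  refine Complex.continuous_ofReal.comp_continuousOn (ContinuousOn.div (by fun_prop) (by fun_prop) ?_)
  intro t ht
  exact abs_ne_zero.mpr ht

theorem tendsto_abs_mul_cos_mul_div_abs (ω : ℝ) :
    Tendsto (fun t : ℝ => ((|t| : ℝ) : ℂ) * ((Real.cos (ω * t) / |t| : ℝ) : ℂ)) (𝓝[≠] 0) (𝓝 1) := by
  have hcos : Tendsto (fun t : ℝ => ((Real.cos (ω * t) : ℝ) : ℂ)) (𝓝[≠] 0) (𝓝 1) := by
    have : Continuous (fun t : ℝ => ((Real.cos (ω * t) : ℝ) : ℂ)) := by fun_prop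
    simpa using (this.tendsto 0).mono_left nhdsWithin_le_nhds
  refine hcos.congr' ?_
  filter_upwards [self_mem_nhdsWithin] with t ht
  have : ((|t| : ℝ) : ℂ) ≠ 0 := by exact_mod_cast abs_ne_zero.mpr ht
  push_cast
  field_simp

/-- The function `f t = cos(ω t)/|t|` satisfies the HRT conjecture: its
time-frequency translates (with distinct time coordinates) are linearly
independent on the complement of the translated singularities. -/
theorem stmt_9 (ω : ℝ) {N : ℕ} (x w : Fin N → ℝ) (hx : Function.Injective x)
    (c : Fin N → ℂ)
    (hdep : ∀ t : ℝ, (∀ i, t ≠ x i) →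
      ∑ i, c i * (Complex.exp (2 * Real.pi * Complex.I * ((w i * t : ℝ) : ℂ)) *
        ((Real.cos (ω * (t - x i)) / |t - x i| : ℝ) : ℂ)) = 0) :
    ∀ i, c i = 0 :=
  eq_zero_of_sum_mul_comp_sub_eq_zero one_ne_zero (continuousOn_cos_mul_div_abs ω)
    (tendsto_abs_mul_cos_mul_div_abs ω) hx (fun j => by fun_prop)
    (fun j => Complex.exp_ne_zero _) hdep
end

section
/- Let f, g ∈ L^2(R^n) with ⟨f,g⟩ ≠ 0, and suppose the short-time Fourier transform V_g f(x,ω) = ⟨f, M_ω T_x g⟩ satisfies |V_g f(λ)| < |⟨f,g⟩|/(N-1) for all λ ∈ R^{2n} with ‖λ‖ > R. If Λ = {λ_1,...,λ_N} ⊂ R^{2n} satisfies ‖λ_i - λ_j‖ > R for all i ≠ j, then the time-frequency shifts π(λ_1)f,...,π(λ_N)f are linearly independent in L^2(R^n). -/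
open scoped BigOperators
open MeasureTheory
open scoped ComplexConjugate

/-
The Gram matrix `G i k = ⟨π(λ_i) f, π(λ_k) g⟩` of the two families of time-frequency shifts
has entries `V_g f(λ_k - λ_i)` up to unimodular phases. Its diagonal entries all equal
`⟨f, g⟩`, while the separation of `Λ` and the decay of `V_g f` make each of the `N - 1`
off-diagonal entries of a column smaller than `|⟨f, g⟩| / (N - 1)`. So `G` is strictly
diagonally dominant, hence invertible, and a vanishing combination `∑ c_i π(λ_i) f = 0`,
which gives `c ᵥ* G = 0`, forces `c = 0`.
-/

lemma norm_exp_two_pi_I_mul_ofReal (r : ℝ) :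
    ‖Complex.exp (2 * Real.pi * Complex.I * (r : ℂ))‖ = 1 := by
  rw [show 2 * Real.pi * Complex.I * (r : ℂ) = ((2 * Real.pi * r : ℝ) : ℂ) * Complex.I by
    push_cast; ring, Complex.norm_exp_ofReal_mul_I]

lemma sum_erase_lt_of_lt_div {ι : Type*} [Fintype ι] [DecidableEq ι] {a : ι → ℝ} {M : ℝ}
    (hM : 0 < M) (k : ι) (h : ∀ i ≠ k, a i < M / (Fintype.card ι - 1)) :
    ∑ i ∈ Finset.univ.erase k, a i < M := by
  rcases (Finset.univ.erase k).eq_empty_or_nonempty with hempty | hne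
  · rwa [hempty, Finset.sum_empty]
  have hcard : (Finset.univ.erase k).card = Fintype.card ι - 1 := by
    rw [Finset.card_erase_of_mem (Finset.mem_univ k), Finset.card_univ]
  have hcard_gt : 1 < Fintype.card ι := by
    have := hne.card_pos
    omega
  have hcard_sub : (Fintype.card ι : ℝ) - 1 ≠ 0 := by
    rw [sub_ne_zero]
    exact_mod_cast hcard_gt.ne'
  calc ∑ i ∈ Finset.univ.erase k, a i
      < ∑ _i ∈ Finset.univ.erase k, M / (Fintype.card ι - 1) :=
        Finset.sum_lt_sum_of_nonempty hne fun i hi => h i (Finset.ne_of_mem_erase hi)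
    _ = M := by
        rw [Finset.sum_const, hcard, nsmul_eq_mul,
          Nat.cast_sub hcard_gt.le, Nat.cast_one]
        field_simp

section TimeFrequency

variable {E : Type*} [NormedAddCommGroup E] [InnerProductSpace ℝ E]

/-- The time-frequency shift `π(x, w) = M_w T_x`. -/
noncomputable def tfShift (x w : E) (f : E → ℂ) (t : E) : ℂ :=
  Complex.exp (2 * Real.pi * Complex.I * ((inner ℝ w t : ℝ) : ℂ)) * f (t - x)

lemma conj_tfShift_apply (x w : E) (g : E → ℂ) (t : E) :
    conj (tfShift x w g t) =
      conj (g (t - x)) *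
        Complex.exp (-(2 * Real.pi * Complex.I * ((inner ℝ w t : ℝ) : ℂ))) := by
  rw [tfShift, map_mul, ← Complex.exp_conj, mul_comm]
  congr 2
  rw [map_mul, map_mul, map_mul, Complex.conj_I, Complex.conj_ofReal, Complex.conj_ofReal,
    map_ofNat]
  ring

variable [MeasurableSpace E]

/-- The short-time Fourier transform `V_g f (a, b) = ⟨f, π(a, b) g⟩`. -/
noncomputable def stft (μ : Measure E) (g f : E → ℂ) (a b : E) : ℂ :=
  ∫ t, f t * conj (g (t - a)) *
    Complex.exp (-(2 * Real.pi * Complex.I * ((inner ℝ b t : ℝ) : ℂ))) ∂μ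

lemma stft_zero_zero (μ : Measure E) (g f : E → ℂ) :
    stft μ g f 0 0 = ∫ t, f t * conj (g t) ∂μ := by
  simp [stft]

variable {μ : Measure E} [μ.IsAddRightInvariant]

lemma stft_tfShift [MeasurableAdd E] (g f : E → ℂ) (x w a b : E) :
    stft μ g (tfShift x w f) a b =
      Complex.exp (2 * Real.pi * Complex.I * ((inner ℝ (w - b) x : ℝ) : ℂ)) *
        stft μ g f (a - x) (b - w) := by
  rw [stft, stft, ← integral_add_right_eq_self _ x, ← integral_const_mul]
  refine integral_congr_ae (ae_of_all _ fun t => ?_)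
  have hphase : Complex.exp (2 * Real.pi * Complex.I * ((inner ℝ w (t + x) : ℝ) : ℂ)) *
      Complex.exp (-(2 * Real.pi * Complex.I * ((inner ℝ b (t + x) : ℝ) : ℂ))) =
      Complex.exp (2 * Real.pi * Complex.I * ((inner ℝ (w - b) x : ℝ) : ℂ)) *
      Complex.exp (-(2 * Real.pi * Complex.I * ((inner ℝ (b - w) t : ℝ) : ℂ))) := by
    rw [← Complex.exp_add, ← Complex.exp_add]
    congr 1
    simp only [inner_add_right, inner_sub_left, Complex.ofReal_add, Complex.ofReal_sub]
    ring
  simp only [tfShift, add_sub_cancel_right, show t + x - a = t - (a - x) by abel]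
  linear_combination (f t * conj (g (t - (a - x)))) * hphase

lemma norm_stft_tfShift [MeasurableAdd E] (g f : E → ℂ) (x w a b : E) :
    ‖stft μ g (tfShift x w f) a b‖ = ‖stft μ g f (a - x) (b - w)‖ := by
  rw [stft_tfShift, norm_mul, norm_exp_two_pi_I_mul_ofReal, one_mul]

variable [BorelSpace E]

lemma MeasureTheory.MemLp.tfShift {f : E → ℂ} (hf : MemLp f 2 μ) (x w : E) :
    MemLp (tfShift x w f) 2 μ := by
  have hfx : MemLp (fun t => f (t - x)) 2 μ :=
    hf.comp_measurePreserving (measurePreserving_sub_right μ x)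
  have hexp : Continuous fun t : E =>
      Complex.exp (2 * Real.pi * Complex.I * ((inner ℝ w t : ℝ) : ℂ)) := by fun_prop
  refine hfx.of_le (hexp.aestronglyMeasurable.mul hfx.1) (ae_of_all _ fun t => ?_)
  rw [_root_.tfShift, norm_mul, norm_exp_two_pi_I_mul_ofReal, one_mul]

lemma integrable_stft_integrand {f g : E → ℂ} (hf : MemLp f 2 μ) (hg : MemLp g 2 μ)
    (a b : E) :
    Integrable (fun t => f t * conj (g (t - a)) *
      Complex.exp (-(2 * Real.pi * Complex.I * ((inner ℝ b t : ℝ) : ℂ)))) μ := by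
  refine (hf.integrable_mul (hg.tfShift a b).star).congr (ae_of_all _ fun t => ?_)
  simp only [Pi.mul_apply, Pi.star_apply, Complex.star_def, conj_tfShift_apply, mul_assoc]

lemma sum_mul_stft_eq_zero {ι : Type*} {s : Finset ι} {c : ι → ℂ} {F : ι → E → ℂ}
    {g : E → ℂ} (hF : ∀ i ∈ s, MemLp (F i) 2 μ) (hg : MemLp g 2 μ)
    (hsum : ∀ᵐ t ∂μ, ∑ i ∈ s, c i * F i t = 0) (a b : E) :
    ∑ i ∈ s, c i * stft μ g (F i) a b = 0 := by
  set φ : E → ℂ := fun t =>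
    conj (g (t - a)) * Complex.exp (-(2 * Real.pi * Complex.I * ((inner ℝ b t : ℝ) : ℂ)))
  calc ∑ i ∈ s, c i * stft μ g (F i) a b = ∫ t, ∑ i ∈ s, c i * (F i t * φ t) ∂μ := by
        rw [integral_finsetSum _ fun i hi =>
          ((integrable_stft_integrand (hF i hi) hg a b).const_mul (c i)).congr
            (ae_of_all _ fun t => by simp only [φ, mul_assoc])]
        simp only [stft, integral_const_mul, φ, mul_assoc]
    _ = ∫ t, (∑ i ∈ s, c i * F i t) * φ t ∂μ := by
        simp only [Finset.sum_mul, mul_assoc]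
    _ = 0 := integral_eq_zero_of_ae (by filter_upwards [hsum] with t ht; simp [ht])

end TimeFrequency

theorem stmt_12_general {n N : ℕ}
    (f g : EuclideanSpace ℝ (Fin n) → ℂ)
    (hf : MemLp f 2 (volume : Measure (EuclideanSpace ℝ (Fin n))))
    (hg : MemLp g 2 (volume : Measure (EuclideanSpace ℝ (Fin n))))
    (hfg : (∫ t, f t * (starRingEnd ℂ) (g t)) ≠ 0)
    (V : EuclideanSpace ℝ (Fin n) → EuclideanSpace ℝ (Fin n) → ℂ)
    (hV : ∀ a b, V a b = ∫ t, f t * (starRingEnd ℂ) (g (t - a)) *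
      Complex.exp (-(2 * Real.pi * Complex.I * ((inner ℝ b t : ℝ) : ℂ))))
    (x w : Fin N → EuclideanSpace ℝ (Fin n))
    (R : ℝ)
    (hdecay : ∀ a b : EuclideanSpace ℝ (Fin n),
      R < Real.sqrt (‖a‖ ^ 2 + ‖b‖ ^ 2) →
      ‖V a b‖ <
        ‖∫ t, f t * (starRingEnd ℂ) (g t)‖ / ((N : ℝ) - 1))
    (hsep : ∀ i j, i ≠ j →
      R < Real.sqrt (‖x i - x j‖ ^ 2 + ‖w i - w j‖ ^ 2))
    (c : Fin N → ℂ)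
    (hdep : ∀ᵐ t : EuclideanSpace ℝ (Fin n),
      ∑ i, c i * (Complex.exp (2 * Real.pi * Complex.I * ((inner ℝ (w i) t : ℝ) : ℂ)) *
        f (t - x i)) = 0) :
    ∀ i, c i = 0 := by
  obtain rfl : V = stft volume g f := funext₂ hV
  let G : Matrix (Fin N) (Fin N) ℂ := fun i k =>
    stft volume g (tfShift (x i) (w i) f) (x k) (w k)
  have hcG : Matrix.vecMul c G = 0 :=
    funext fun k => sum_mul_stft_eq_zero (fun i _ => hf.tfShift (x i) (w i)) hg hdep (x k) (w k)
  have hdiag : ∀ k, G k k = ∫ t, f t * conj (g t) := fun k => by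
    simp only [G, stft_tfShift, sub_self, stft_zero_zero, inner_zero_left, Complex.ofReal_zero,
      mul_zero, Complex.exp_zero, one_mul]
  have hoff : ∀ k i, i ≠ k → ‖G i k‖ < ‖∫ t, f t * conj (g t)‖ / ((N : ℝ) - 1) :=
    fun k i hik => by simpa only [G, norm_stft_tfShift] using hdecay _ _ (hsep k i hik.symm)
  have hdet : G.det ≠ 0 := det_ne_zero_of_sum_col_lt_diag fun k => by
    rw [hdiag]
    exact sum_erase_lt_of_lt_div (norm_pos_iff.mpr hfg) k
      (by simpa only [Fintype.card_fin] using hoff k)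
  exact congrFun (Matrix.eq_zero_of_vecMul_eq_zero hdet hcG)

/-- Theorem 3: if the STFT `V_g f` satisfies `|V_g f λ| < |⟨f,g⟩|/(N-1)` outside
the ball of radius `R` in the time-frequency plane, and the points of `Λ` are
pairwise separated by more than `R`, then the time-frequency shifts `π(λ_i) f`
are linearly independent in `L²(ℝⁿ)`. -/
theorem stmt_12 {n N : ℕ} (hN : 2 ≤ N)
    (f g : EuclideanSpace ℝ (Fin n) → ℂ)
    (hf : MemLp f 2 (volume : Measure (EuclideanSpace ℝ (Fin n))))
    (hg : MemLp g 2 (volume : Measure (EuclideanSpace ℝ (Fin n))))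
    (hfg : (∫ t, f t * (starRingEnd ℂ) (g t)) ≠ 0)
    (V : EuclideanSpace ℝ (Fin n) → EuclideanSpace ℝ (Fin n) → ℂ)
    (hV : ∀ a b, V a b = ∫ t, f t * (starRingEnd ℂ) (g (t - a)) *
      Complex.exp (-(2 * Real.pi * Complex.I * ((inner ℝ b t : ℝ) : ℂ))))
    (x w : Fin N → EuclideanSpace ℝ (Fin n))
    (R : ℝ) (hR : 0 < R)
    (hdecay : ∀ a b : EuclideanSpace ℝ (Fin n),
      R < Real.sqrt (‖a‖ ^ 2 + ‖b‖ ^ 2) →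
      ‖V a b‖ <
        ‖∫ t, f t * (starRingEnd ℂ) (g t)‖ / ((N : ℝ) - 1))
    (hsep : ∀ i j, i ≠ j →
      R < Real.sqrt (‖x i - x j‖ ^ 2 + ‖w i - w j‖ ^ 2))
    (c : Fin N → ℂ)
    (hdep : ∀ᵐ t : EuclideanSpace ℝ (Fin n),
      ∑ i, c i * (Complex.exp (2 * Real.pi * Complex.I * ((inner ℝ (w i) t : ℝ) : ℂ)) *
        f (t - x i)) = 0) :
    ∀ i, c i = 0 :=
  stmt_12_general f g hf hg hfg V hV x w R hdecay hsep c hdep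
end
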